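/- Let I ⊆ ℝⁿ be nonempty, topologically open, and geometrically convex, where ℝⁿ carries the coordinatewise partial order. Then I is poset-connected: any two points p, q ∈ I are joined by a zigzag path in I. -/

import Mathlib

open CategoryTheory
open scoped Classical ENNReal NNReal

set_option linter.unusedSectionVars false
set_option linter.unusedVariables false

/-! ## Posets, intervals, flows -/

variable {P : Type} [PartialOrder P]

/-- A subset of a poset is poset-convex if it contains every point between two of its points. -/
def PosetConvex (I : Set P) : Prop :=
  ∀ ⦃p q r : P⦄, p ∈ I → q ∈ I → p ≤ r → r ≤ q → r ∈ I

/-- A subset of a poset is poset-connected if any two of its points are joined by a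
zigzag path inside the subset. -/
def PosetConnected (I : Set P) : Prop :=
  ∀ p ∈ I, ∀ q ∈ I,
    Relation.ReflTransGen (fun a b => b ∈ I ∧ (a ≤ b ∨ b ≤ a)) p q

/-- An interval in a poset is a poset-convex and poset-connected subset. -/
def IsInterval (I : Set P) : Prop := PosetConvex I ∧ PosetConnected I

/-- `Q` is a poset-connected component of `U`: a poset-connected subset of `U`, maximal with
respect to inclusion among poset-connected subsets of `U`. -/
def IsPosetComponent (U Q : Set P) : Prop :=
  Q ⊆ U ∧ PosetConnected Q ∧
    ∀ Q' : Set P, Q' ⊆ U → PosetConnected Q' → Q ⊆ Q' → Q' = Q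

/-- A subset `Q` of `I ∩ J` is `(I,J)`-valid. -/
def IsValid (I J Q : Set P) : Prop :=
  ∀ p ∈ Q, (∀ q ∈ I, q ≤ p → q ∈ J) ∧ (∀ r ∈ J, p ≤ r → r ∈ I)

/-- An `ℝ`-flow on a poset. -/
structure RFlow (P : Type) [PartialOrder P] where
  Ω : ℝ → P → P
  mono : ∀ t : ℝ, Monotone (Ω t)
  mono_param : ∀ {t s : ℝ}, t ≤ s → ∀ p : P, Ω t p ≤ Ω s p
  add : ∀ t s : ℝ, ∀ p : P, Ω (t + s) p = Ω t (Ω s p)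
  zero : ∀ p : P, Ω 0 p = p

/-- The `t`-shift `I(t)` of a subset of a poset with an `ℝ`-flow. -/
def RFlow.shiftSet (Φ : RFlow P) (I : Set P) (t : ℝ) : Set P := {p : P | Φ.Ω t p ∈ I}

lemma RFlow.self_le (Φ : RFlow P) {t : ℝ} (ht : 0 ≤ t) (p : P) : p ≤ Φ.Ω t p := by
  have h := Φ.mono_param ht p
  rwa [Φ.zero] at h

lemma RFlow.self_le_twice (Φ : RFlow P) {t : ℝ} (ht : 0 ≤ t) (p : P) :
    p ≤ Φ.Ω t (Φ.Ω t p) :=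
  (Φ.self_le ht p).trans (Φ.self_le ht _)

lemma RFlow.omega_neg_omega (Φ : RFlow P) (t : ℝ) (p : P) : Φ.Ω (-t) (Φ.Ω t p) = p := by
  have h := Φ.add (-t) t p
  rw [neg_add_cancel, Φ.zero] at h
  exact h.symm

lemma RFlow.omega_omega_neg (Φ : RFlow P) (t : ℝ) (p : P) : Φ.Ω t (Φ.Ω (-t) p) = p := by
  have h := Φ.add t (-t) p
  rw [add_neg_cancel, Φ.zero] at h
  exact h.symm

lemma RFlow.posetConvex_shiftSet (Φ : RFlow P) {I : Set P} (hI : PosetConvex I) (t : ℝ) :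
    PosetConvex (Φ.shiftSet I t) := by
  intro p q r hp hq hpr hrq
  exact hI hp hq (Φ.mono t hpr) (Φ.mono t hrq)

lemma RFlow.posetConnected_shiftSet (Φ : RFlow P) {I : Set P} (hI : PosetConnected I) (t : ℝ) :
    PosetConnected (Φ.shiftSet I t) := by
  intro p hp q hq
  have h := hI _ hp _ hq
  have h2 := Relation.ReflTransGen.lift
    (p := fun a b : P => b ∈ Φ.shiftSet I t ∧ (a ≤ b ∨ b ≤ a)) (fun x : P => Φ.Ω (-t) x)
    (fun a b (hab : b ∈ I ∧ (a ≤ b ∨ b ≤ a)) =>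
      (⟨show Φ.Ω t (Φ.Ω (-t) b) ∈ I by rw [Φ.omega_omega_neg]; exact hab.1,
      hab.2.imp (fun h' => Φ.mono (-t) h') (fun h' => Φ.mono (-t) h')⟩ :
        Φ.Ω (-t) b ∈ Φ.shiftSet I t ∧ (Φ.Ω (-t) a ≤ Φ.Ω (-t) b ∨ Φ.Ω (-t) b ≤ Φ.Ω (-t) a))) _ _ h
  simpa only [Function.onFun, Φ.omega_neg_omega] using h2

lemma RFlow.isInterval_shiftSet (Φ : RFlow P) {I : Set P} (hI : IsInterval I) (t : ℝ) :
    IsInterval (Φ.shiftSet I t) :=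
  ⟨Φ.posetConvex_shiftSet hI.1 t, Φ.posetConnected_shiftSet hI.2 t⟩

lemma RFlow.shiftSet_nonempty (Φ : RFlow P) {I : Set P} (hI : I.Nonempty) (t : ℝ) :
    (Φ.shiftSet I t).Nonempty := by
  obtain ⟨x, hx⟩ := hI
  exact ⟨Φ.Ω (-t) x, show Φ.Ω t (Φ.Ω (-t) x) ∈ I by rw [Φ.omega_omega_neg]; exact hx⟩

/-! ## Characteristic (interval) persistence modules -/

variable (K : Type) [Field K]

/-- The pointwise value of the characteristic module of `I`, as a submodule of `K`. -/
noncomputable def charSub (I : Set P) (p : P) : Submodule K K :=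
  if p ∈ I then ⊤ else ⊥

lemma charSub_eq_top {I : Set P} {p : P} (hp : p ∈ I) : charSub K I p = ⊤ := if_pos hp

lemma charSub_eq_bot {I : Set P} {p : P} (hp : p ∉ I) : charSub K I p = ⊥ := if_neg hp

lemma charElt_eq_zero {I : Set P} {p : P} (hp : p ∉ I) (x : ↥(charSub K I p)) : x = 0 := by
  exact Subtype.ext ((Submodule.eq_bot_iff _).mp (charSub_eq_bot K hp) (x : K) x.2)

/-- The structure maps of the characteristic module of `I`. -/
noncomputable def charMap (I : Set P) (p q : P) :
    ↥(charSub K I p) →ₗ[K] ↥(charSub K I q) :=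
  if h : p ∈ I ∧ q ∈ I then
    { toFun := fun x => ⟨(x : K), by rw [charSub_eq_top K h.2]; exact Submodule.mem_top⟩
      map_add' := fun x y => rfl
      map_smul' := fun c x => rfl }
  else 0

lemma charMap_id (I : Set P) (p : P) : charMap K I p p = LinearMap.id := by
  by_cases hp : p ∈ I
  · simp only [charMap, dif_pos (And.intro hp hp)]
    rfl
  · ext x
    rw [charElt_eq_zero K hp x]
    simp

lemma charMap_comp {I : Set P} (hI : PosetConvex I) {p q r : P} (hpq : p ≤ q) (hqr : q ≤ r) :
    (charMap K I q r).comp (charMap K I p q) = charMap K I p r := by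
  by_cases hp : p ∈ I
  · by_cases hr : r ∈ I
    · have hq : q ∈ I := hI hp hr hpq hqr
      ext x
      simp only [charMap, dif_pos (And.intro hp hq), dif_pos (And.intro hq hr),
        dif_pos (And.intro hp hr), LinearMap.comp_apply, LinearMap.coe_mk, AddHom.coe_mk]
    · ext x
      exact congrArg Subtype.val
        ((charElt_eq_zero K hr ((charMap K I q r).comp (charMap K I p q) x)).trans
          (charElt_eq_zero K hr (charMap K I p r x)).symm)
  · ext x
    rw [charElt_eq_zero K hp x]
    simp

/-- The characteristic persistence module `C(I)` of a poset-convex subset `I`. -/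
noncomputable def charMod (I : Set P) (hI : PosetConvex I) : P ⥤ ModuleCat K where
  obj p := ModuleCat.of K ↥(charSub K I p)
  map {p q} h := ModuleCat.ofHom (charMap K I p q)
  map_id p := ModuleCat.hom_ext (charMap_id K I p)
  map_comp {p q r} h1 h2 := ModuleCat.hom_ext (charMap_comp K hI (leOfHom h1) (leOfHom h2)).symm

/-- The zero persistence module, realized as the characteristic module of the empty interval. -/
noncomputable def zeroPMod : P ⥤ ModuleCat K :=
  charMod K (∅ : Set P) (fun _ _ _ hp _ _ _ => absurd hp (Set.notMem_empty _))

/-! ## Barcodes and interval-decomposable modules -/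

/-- A barcode over a poset: a multiset of nonempty intervals, encoded as an indexed family. -/
structure Barcode (P : Type) [PartialOrder P] where
  ι : Type
  B : ι → Set P
  interval : ∀ a : ι, IsInterval (B a)
  nonempty : ∀ a : ι, (B a).Nonempty

/-- The interval-decomposable module `⊕_{a} C(B a)` associated to a barcode. -/
noncomputable def bcMod (D : Barcode P) : P ⥤ ModuleCat K where
  obj p := ModuleCat.of K (Π₀ a : D.ι, ↥(charSub K (D.B a) p))
  map {p q} h := ModuleCat.ofHom (DFinsupp.mapRange.linearMap (fun a => charMap K (D.B a) p q))
  map_id p := by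
    have h : (fun a : D.ι => charMap K (D.B a) p p)
        = fun a : D.ι => (LinearMap.id : ↥(charSub K (D.B a) p) →ₗ[K] ↥(charSub K (D.B a) p)) := by
      funext a; exact charMap_id K (D.B a) p
    apply ModuleCat.hom_ext
    show DFinsupp.mapRange.linearMap (fun a => charMap K (D.B a) p p) = LinearMap.id
    rw [h, DFinsupp.mapRange.linearMap_id]
  map_comp {p q r} h1 h2 := by
    have h : (fun a : D.ι => charMap K (D.B a) p r)
        = fun a : D.ι => (charMap K (D.B a) q r).comp (charMap K (D.B a) p q) := by
      funext a
      exact (charMap_comp K (D.interval a).1 (leOfHom h1) (leOfHom h2)).symm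
    apply ModuleCat.hom_ext
    show DFinsupp.mapRange.linearMap (fun a => charMap K (D.B a) p r) = _
    rw [h, DFinsupp.mapRange.linearMap_comp]
    rfl

/-- `M` is interval-decomposable with barcode `D`. -/
def IsDecompositionOf (D : Barcode P) (M : P ⥤ ModuleCat K) : Prop :=
  Nonempty (M ≅ bcMod K D)

/-- The shift of a barcode along a flow. -/
noncomputable def Barcode.shift (D : Barcode P) (Φ : RFlow P) (t : ℝ) : Barcode P where
  ι := D.ι
  B a := Φ.shiftSet (D.B a) t
  interval a := Φ.isInterval_shiftSet (D.interval a) t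
  nonempty a := Φ.shiftSet_nonempty (D.nonempty a) t

/-! ## Shifts of modules, interleavings, distances -/

/-- The shift `M(t)` of a persistence module along a flow. -/
noncomputable def Pshift (Φ : RFlow P) (t : ℝ) (M : P ⥤ ModuleCat K) : P ⥤ ModuleCat K :=
  (Φ.mono t).functor ⋙ M

/-- The ordered pair `(M, N)` is left `ε`-interleaved. -/
noncomputable def LeftInterleaved (Φ : RFlow P) {ε : ℝ} (hε : 0 ≤ ε)
    (M N : P ⥤ ModuleCat K) : Prop :=
  ∃ (f : M ⟶ Pshift K Φ ε N) (g : N ⟶ Pshift K Φ ε M),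
    ∀ p : P, f.app p ≫ g.app (Φ.Ω ε p) = M.map (homOfLE (Φ.self_le_twice hε p))

/-- `M` and `N` are `ε`-interleaved. -/
noncomputable def Interleaved (Φ : RFlow P) {ε : ℝ} (hε : 0 ≤ ε)
    (M N : P ⥤ ModuleCat K) : Prop :=
  ∃ (f : M ⟶ Pshift K Φ ε N) (g : N ⟶ Pshift K Φ ε M),
    (∀ p : P, f.app p ≫ g.app (Φ.Ω ε p) = M.map (homOfLE (Φ.self_le_twice hε p))) ∧
    (∀ p : P, g.app p ≫ f.app (Φ.Ω ε p) = N.map (homOfLE (Φ.self_le_twice hε p)))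

/-- The interleaving distance between two persistence modules. -/
noncomputable def dI (Φ : RFlow P) (M N : P ⥤ ModuleCat K) : ℝ≥0∞ :=
  ⨅ (ε : NNReal) (_ : Interleaved K Φ ε.coe_nonneg M N), (ε : ℝ≥0∞)

/-- An interval `I` is `t`-trivial if the transition morphism `C(I) → C(I(t))` vanishes. -/
noncomputable def IsTrivialIv (Φ : RFlow P) {t : ℝ} (ht : 0 ≤ t)
    (I : Set P) (hI : PosetConvex I) : Prop :=
  ∀ p : P, (charMod K I hI).map (homOfLE (Φ.self_le ht p)) = 0

/-- An `ε`-correspondence between two barcodes. -/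
noncomputable def IsCorrespondence (Φ : RFlow P) {ε : ℝ} (hε : 0 ≤ ε)
    (DM DN : Barcode P) (σ : Set (DM.ι × DN.ι)) : Prop :=
  (∀ ab ∈ σ, Interleaved K Φ hε
      (charMod K (DM.B ab.1) (DM.interval ab.1).1) (charMod K (DN.B ab.2) (DN.interval ab.2).1)) ∧
  (∀ a : DM.ι, (∀ b : DN.ι, (a, b) ∉ σ) →
      Interleaved K Φ hε (charMod K (DM.B a) (DM.interval a).1) (zeroPMod K)) ∧
  (∀ b : DN.ι, (∀ a : DM.ι, (a, b) ∉ σ) →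
      Interleaved K Φ hε (zeroPMod K) (charMod K (DN.B b) (DN.interval b).1))

/-- An `ε`-matching between two barcodes. -/
noncomputable def IsMatching (Φ : RFlow P) {ε : ℝ} (hε : 0 ≤ ε)
    (DM DN : Barcode P) (σ : Set (DM.ι × DN.ι)) : Prop :=
  IsCorrespondence K Φ hε DM DN σ ∧
  (∀ a b b', (a, b) ∈ σ → (a, b') ∈ σ → b = b') ∧
  (∀ a a' b, (a, b) ∈ σ → (a', b) ∈ σ → a = a')

/-- The Hausdorff distance between (modules with) barcodes `DM`, `DN`. -/
noncomputable def dH (Φ : RFlow P) (DM DN : Barcode P) : ℝ≥0∞ :=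
  ⨅ (ε : NNReal) (_ : ∃ σ : Set (DM.ι × DN.ι), IsCorrespondence K Φ ε.coe_nonneg DM DN σ),
    (ε : ℝ≥0∞)

/-- The bottleneck distance between (modules with) barcodes `DM`, `DN`. -/
noncomputable def dB (Φ : RFlow P) (DM DN : Barcode P) : ℝ≥0∞ :=
  ⨅ (ε : NNReal) (_ : ∃ σ : Set (DM.ι × DN.ι), IsMatching K Φ ε.coe_nonneg DM DN σ),
    (ε : ℝ≥0∞)


/-!
Zigzag-equivalence classes of an open set `I` in a topological semilattice are open: if `y` is
close to `x`, then so is `x ⊔ y`, which therefore lies in `I`, and `x ≤ x ⊔ y ≥ y` is a zigzag.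
A connected set with open classes has only one, and open convex sets are connected.
-/

instance Pi.continuousSup {ι : Type*} {π : ι → Type*} [∀ i, TopologicalSpace (π i)]
    [∀ i, Max (π i)] [∀ i, ContinuousSup (π i)] : ContinuousSup (∀ i, π i) where
  continuous_sup := continuous_pi fun i =>
    ((continuous_apply i).comp continuous_fst).sup ((continuous_apply i).comp continuous_snd)

section Zigzag

open Topology

variable {α : Type} [SemilatticeSup α] {I : Set α}

lemma reflTransGen_zigzag_of_le_of_ge {x y z : α} (hz : z ∈ I) (hy : y ∈ I) (hxz : x ≤ z)
    (hyz : y ≤ z) : Relation.ReflTransGen (fun a b => b ∈ I ∧ (a ≤ b ∨ b ≤ a)) x y :=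
  .tail (.single ⟨hz, .inl hxz⟩) ⟨hy, .inr hyz⟩

theorem IsPreconnected.posetConnected_of_isOpen [TopologicalSpace α] [ContinuousSup α]
    (hconn : _root_.IsPreconnected I) (hopen : IsOpen I) : PosetConnected I := by
  intro p hp q hq
  refine hconn.induction₂' _ (fun x hx => ?_) (fun _ _ _ _ _ _ => .trans) hp hq
  have hsup : ∀ᶠ y in 𝓝 x, x ⊔ y ∈ I := by
    have h := (continuous_const.sup continuous_id : Continuous fun y : α => x ⊔ y).tendsto x
    rw [sup_idem] at h
    exact h (hopen.mem_nhds hx)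
  filter_upwards [nhdsWithin_le_nhds hsup, self_mem_nhdsWithin] with y hxy hy
  exact ⟨reflTransGen_zigzag_of_le_of_ge hxy hy le_sup_left le_sup_right,
    reflTransGen_zigzag_of_le_of_ge hxy hx le_sup_right le_sup_left⟩

end Zigzag

theorem posetConnected_of_open_convex_general (n : ℕ) (I : Set (Fin n → ℝ))
    (hopen : IsOpen I) (hconv : Convex ℝ I) :
    PosetConnected I :=
  hconv.isPreconnected.posetConnected_of_isOpen hopen

/-- a nonempty, open, geometrically convex subset of `ℝⁿ` (with the
coordinatewise order) is poset-connected. -/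
theorem posetConnected_of_open_convex (n : ℕ) (I : Set (Fin n → ℝ))
    (hne : I.Nonempty) (hopen : IsOpen I) (hconv : Convex ℝ I) :
    PosetConnected I :=
  posetConnected_of_open_convex_general n I hopen hconv
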